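/- Let Q = ∏_{j=1}^∞ [0,1] and fix k, n ∈ ℕ. Define G : F_n(Q) × [0,1] → F_n(Q) by letting G(A,t) replace each element (x₁,x₂,…) of A by (x₁,…,x_k, (1−t)x_{k+1}, (1−t)x_{k+2}, …). Then G is continuous, G(A,0) = A for all A, the diameter of G({A} × [0,1]) is at most 2^{-k} for each A (in a suitable product metric), and G(F_n(Q) × {1}) is homeomorphic to F_n([0,1]^k). -/

import Mathlib

open Metric TopologicalSpace Set Filter unitInterval

/-- The n-th symmetric product: nonempty subsets with at most n points,
as a subspace of the nonempty compact subsets with the Hausdorff metric. -/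
abbrev SymProd (X : Type*) [MetricSpace X] (n : ℕ) :=
  {A : NonemptyCompacts X // (A : Set X).Finite ∧ (A : Set X).ncard ≤ n}

/-- A Z-set in a metric space. -/
def IsZSet {Y : Type*} [MetricSpace Y] (A : Set Y) : Prop :=
  IsClosed A ∧ ∀ ε > 0, ∃ f : Y → Y, Continuous f ∧ (∀ y, f y ∉ A) ∧ ∀ y, dist y (f y) < ε

/-- A Z-map: a continuous map whose image is a Z-set. -/
def IsZMap {X Y : Type*} [MetricSpace X] [MetricSpace Y] (f : X → Y) : Prop :=
  Continuous f ∧ IsZSet (Set.range f)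

/-!
Coordinatewise, `|(1 - t) x_j - (1 - s) y_j| ≤ |x_j - y_j| + |t - s|`, and the parameter only
enters the coordinates `j ≥ k`, of total weight `∑_{j ≥ k} 2^{-(j+1)} = 2^{-k}`. So the map
`(x, t) ↦ G_t x` on `Q × [0,1]` satisfies `d(G_t x, G_s y) ≤ d(x, y) + 2^{-k} |t - s|`, and this
passes to Hausdorff distances of images; continuity and the diameter bound follow. At `t = 1`
the map is `e ∘ p`, where `p : Q → [0,1]^k` forgets the tail and `e` pads with zeros; since
`p ∘ e = id`, the image of `A ↦ G(A, 1)` is the image of the embedding `F_n([0,1]^k) → F_n(Q)`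
induced by `e`.
-/

section Hausdorff

variable {X Y : Type*} [MetricSpace X] [MetricSpace Y]

theorem infDist_image_le_of_dist_le {f g : X → Y} {x : X} {t : Set X} (ht : t.Nonempty) {r : ℝ}
    (h : ∀ y, dist (f x) (g y) ≤ dist x y + r) :
    infDist (f x) (g '' t) ≤ infDist x t + r := by
  have : infDist (f x) (g '' t) - r ≤ infDist x t := (le_infDist ht).2 fun y hy => by
    linarith [h y, infDist_le_dist_of_mem (x := f x) (mem_image_of_mem g hy)]
  linarith

theorem hausdorffDist_image_le_of_dist_le {f g : X → Y} {s t : Set X} (hs : s.Nonempty)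
    (ht : t.Nonempty) (hsb : Bornology.IsBounded s) (htb : Bornology.IsBounded t) {r : ℝ}
    (hr : 0 ≤ r)
    (h : ∀ x y, dist (f x) (g y) ≤ dist x y + r) :
    hausdorffDist (f '' s) (g '' t) ≤ hausdorffDist s t + r := by
  have fin : hausdorffEDist s t ≠ ⊤ := hausdorffEDist_ne_top_of_nonempty_of_bounded hs ht hsb htb
  refine hausdorffDist_le_of_infDist (add_nonneg hausdorffDist_nonneg hr) ?_ ?_
  · rintro _ ⟨x, hx, rfl⟩
    grw [infDist_image_le_of_dist_le ht (h x), infDist_le_hausdorffDist_of_mem hx fin]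
  · rintro _ ⟨y, hy, rfl⟩
    grw [infDist_image_le_of_dist_le hs (fun x => by simpa only [dist_comm] using h x y),
      infDist_le_hausdorffDist_of_mem hy (by rwa [hausdorffEDist_comm]), hausdorffDist_comm]

end Hausdorff

namespace SymProd

variable {X Y : Type*} [MetricSpace X] [MetricSpace Y] {n : ℕ}

theorem ext {A B : SymProd X n} (h : (A.1 : Set X) = B.1) : A = B :=
  Subtype.ext (NonemptyCompacts.ext h)

noncomputable def map (f : X → Y) (hf : Continuous f) (A : SymProd X n) : SymProd Y n :=
  ⟨A.1.map f hf, by simpa using A.2.1.image f,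
    by simpa using (ncard_image_le A.2.1).trans A.2.2⟩

theorem coe_map {f : X → Y} (hf : Continuous f) (A : SymProd X n) :
    ((map f hf A).1 : Set Y) = f '' A.1 :=
  NonemptyCompacts.coe_map hf A.1

theorem continuous_map {f : X → Y} (hf : Continuous f) : Continuous (map (n := n) f hf) :=
  (hf.nonemptyCompacts_map.comp continuous_subtype_val).subtype_mk _

theorem leftInverse_map {e : X → Y} {p : Y → X} (he : Continuous e) (hp : Continuous p)
    (h : Function.LeftInverse p e) :
    Function.LeftInverse (map (n := n) p hp) (map e he) := fun A =>
  ext <| by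
    rw [coe_map, coe_map, image_image, image_congr fun x _ => h x, image_id']

theorem nonempty_homeomorph_range_map_comp {e : X → Y} {p : Y → X} (he : Continuous e)
    (hp : Continuous p) (h : Function.LeftInverse p e) :
    Nonempty (range (map (n := n) e he ∘ map p hp) ≃ₜ SymProd X n) :=
  have hinv := leftInverse_map (n := n) he hp h
  ⟨(Homeomorph.setCongr (hinv.surjective.range_comp _)).trans
    (hinv.isEmbedding (continuous_map hp) (continuous_map he)).toHomeomorph.symm⟩

theorem dist_le_of_coe_eq_image {f g : X → Y} {A B : SymProd X n} {A' B' : SymProd Y n}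
    (hA : (A'.1 : Set Y) = f '' A.1) (hB : (B'.1 : Set Y) = g '' B.1) {r : ℝ} (hr : 0 ≤ r)
    (h : ∀ x y, dist (f x) (g y) ≤ dist x y + r) :
    dist A' B' ≤ dist A B + r := by
  simp only [Subtype.dist_eq, NonemptyCompacts.dist_eq, hA, hB]
  exact hausdorffDist_image_le_of_dist_le A.1.nonempty B.1.nonempty A.1.isCompact.isBounded
    B.1.isCompact.isBounded hr h

end SymProd

theorem lipschitzWith_two_of_dist_le_add {X Y Z : Type*} [PseudoMetricSpace X]
    [PseudoMetricSpace Y] [PseudoMetricSpace Z] {f : X × Y → Z}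
    (h : ∀ a b t s, dist (f (a, t)) (f (b, s)) ≤ dist a b + dist t s) : LipschitzWith 2 f :=
  LipschitzWith.of_dist_le_mul fun ⟨a, t⟩ ⟨b, s⟩ => by
    rw [Prod.dist_eq]
    push_cast
    linarith [h a b t s, le_max_left (dist a b) (dist t s), le_max_right (dist a b) (dist t s)]

theorem summable_geometric_inv_two_succ_mul {c : ℕ → ℝ} {C : ℝ} (h0 : ∀ j, 0 ≤ c j)
    (h1 : ∀ j, c j ≤ C) : Summable fun j => (2:ℝ)⁻¹ ^ (j + 1) * c j := by
  refine Summable.of_nonneg_of_le (fun j => mul_nonneg (by positivity) (h0 j)) (fun j => ?_)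
    ((summable_geometric_of_lt_one (by norm_num) (by norm_num : (2:ℝ)⁻¹ < 1)).mul_left (2⁻¹ * C))
  rw [pow_succ]
  nlinarith [h1 j, pow_pos (by norm_num : (0:ℝ) < 2⁻¹) j]

theorem tsum_geometric_inv_two_succ_mul_ite (k : ℕ) :
    ∑' j : ℕ, (2:ℝ)⁻¹ ^ (j + 1) * (if k ≤ j then 1 else 0) = 2⁻¹ ^ k := by
  calc _ = ∑' j : ℕ, (if k ≤ j then (2:ℝ)⁻¹ ^ j else 0) * 2⁻¹ :=
        tsum_congr fun j => by split_ifs <;> simp [pow_succ]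
    _ = 2⁻¹ ^ k := by rw [tsum_mul_right, tsum_geometric_inv_two_ge]; ring

theorem unitInterval.abs_sub_le_one (a b : I) : |(a : ℝ) - b| ≤ 1 :=
  Real.dist_le_of_mem_Icc_01 a.2 b.2

def scaleTail (k : ℕ) (t : I) (x : ℕ → I) : ℕ → I := fun j => if j < k then x j else σ t * x j

def extendZero (k : ℕ) (x : Fin k → I) : ℕ → I := fun j => if h : j < k then x ⟨j, h⟩ else 0

def restrictFin (k : ℕ) (x : ℕ → I) : Fin k → I := fun i => x i

theorem scaleTail_zero (k : ℕ) : scaleTail k 0 = id := by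
  funext x j
  simp [scaleTail]

theorem scaleTail_one (k : ℕ) : scaleTail k 1 = extendZero k ∘ restrictFin k := by
  funext x j
  by_cases hj : j < k <;> simp [scaleTail, extendZero, restrictFin, hj]

theorem leftInverse_restrictFin_extendZero (k : ℕ) :
    Function.LeftInverse (restrictFin k) (extendZero k) := fun x => by
  funext i
  simp [restrictFin, extendZero]

section HilbertCube

-- Continuity is obtained through Lipschitz bounds: a bare `Continuous` on `ℕ → I` would
-- elaborate with the product topology rather than with the topology of this metric instance.

variable [MetricSpace (ℕ → I)]
  (hm : ∀ x y : ℕ → I, dist x y = ∑' j, (2:ℝ)⁻¹ ^ (j + 1) * |(x j : ℝ) - (y j : ℝ)|)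
include hm

theorem dist_le_tsum_of_abs_sub_le {x y : ℕ → I} {c : ℕ → ℝ} {C : ℝ} (hC : ∀ j, c j ≤ C)
    (h : ∀ j, |(x j : ℝ) - y j| ≤ c j) : dist x y ≤ ∑' j, (2:ℝ)⁻¹ ^ (j + 1) * c j := by
  rw [hm]
  exact Summable.tsum_le_tsum (fun j => mul_le_mul_of_nonneg_left (h j) (by positivity))
    (summable_geometric_inv_two_succ_mul (fun _ => abs_nonneg _) fun j => abs_sub_le_one _ _)
    (summable_geometric_inv_two_succ_mul (fun j => (abs_nonneg _).trans (h j)) hC)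

theorem lipschitzWith_eval (j : ℕ) : LipschitzWith (2 ^ (j + 1)) fun x : ℕ → I => x j := by
  refine LipschitzWith.of_dist_le_mul fun x y => ?_
  have hle : (2:ℝ)⁻¹ ^ (j + 1) * |(x j : ℝ) - y j| ≤ dist x y := by
    rw [hm]
    exact (summable_geometric_inv_two_succ_mul (fun _ => abs_nonneg _)
      fun i => abs_sub_le_one (x i) (y i)).le_tsum j fun i _ => by positivity
  rw [Subtype.dist_eq, Real.dist_eq]
  push_cast
  rwa [inv_pow, inv_mul_le_iff₀ (by positivity)] at hle

theorem lipschitzWith_restrictFin (k : ℕ) : LipschitzWith (2 ^ k) (restrictFin k) := by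
  refine LipschitzWith.of_dist_le_mul fun x y => (dist_pi_le_iff (by positivity)).2 fun i => ?_
  calc dist (x i) (y i) ≤ 2 ^ ((i : ℕ) + 1) * dist x y := by
        simpa using (lipschitzWith_eval hm i).dist_le_mul x y
    _ ≤ 2 ^ k * dist x y := by gcongr; norm_num; exact i.2

theorem lipschitzWith_extendZero (k : ℕ) : LipschitzWith 1 (extendZero k) := by
  refine LipschitzWith.of_dist_le_mul fun x y => ?_
  calc dist (extendZero k x) (extendZero k y)
      ≤ ∑' j : ℕ, (2:ℝ)⁻¹ ^ (j + 1) * dist x y := by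
        refine dist_le_tsum_of_abs_sub_le hm (fun _ => le_rfl) fun j => ?_
        unfold extendZero
        split_ifs
        · exact (Real.dist_eq _ _).symm.le.trans (dist_le_pi_dist x y _)
        · simp
    _ = 1 * dist x y := by
        have := tsum_geometric_inv_two_succ_mul_ite 0
        simp only [zero_le, if_true, mul_one, pow_zero] at this
        rw [tsum_mul_right, this]

theorem dist_scaleTail_le (k : ℕ) (t : I) (x y : ℕ → I) :
    dist (scaleTail k t x) (scaleTail k t y) ≤ dist x y := by
  rw [hm x y]
  refine dist_le_tsum_of_abs_sub_le hm (fun j => abs_sub_le_one (x j) (y j)) fun j => ?_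
  unfold scaleTail
  split_ifs
  · exact le_rfl
  · simp only [Set.Icc.coe_mul, coe_symm_eq, ← mul_sub, abs_mul]
    exact mul_le_of_le_one_left (abs_nonneg _) (by simpa using abs_sub_le_one 1 t)

theorem dist_scaleTail_param_le (k : ℕ) (t s : I) (x : ℕ → I) :
    dist (scaleTail k t x) (scaleTail k s x) ≤ 2⁻¹ ^ k * dist t s := by
  calc dist (scaleTail k t x) (scaleTail k s x)
      ≤ ∑' j : ℕ, (2:ℝ)⁻¹ ^ (j + 1) * ((if k ≤ j then 1 else 0) * dist t s) := by
        refine dist_le_tsum_of_abs_sub_le hm (C := dist t s) (fun j => ?_) fun j => ?_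
        · split_ifs <;> simp [dist_nonneg]
        · unfold scaleTail
          split_ifs with h1 h2
          · omega
          · simp
          · simp only [Set.Icc.coe_mul, coe_symm_eq, ← sub_mul, abs_mul, one_mul]
            rw [sub_sub_sub_cancel_left, abs_of_nonneg (x j).2.1, dist_comm, Subtype.dist_eq,
              Real.dist_eq]
            exact mul_le_of_le_one_right (abs_nonneg _) (x j).2.2
          · omega
    _ = 2⁻¹ ^ k * dist t s := by
        simp only [← mul_assoc]
        rw [tsum_mul_right, tsum_geometric_inv_two_succ_mul_ite]

theorem dist_scaleTail_le_add (k : ℕ) (t s : I) (x y : ℕ → I) :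
    dist (scaleTail k t x) (scaleTail k s y) ≤ dist x y + 2⁻¹ ^ k * dist t s :=
  (dist_triangle _ (scaleTail k t y) _).trans <|
    add_le_add (dist_scaleTail_le hm k t x y) (dist_scaleTail_param_le hm k t s y)

end HilbertCube

theorem stmt18_general [m : MetricSpace (ℕ → I)]
    (hm : ∀ x y : ℕ → I, dist x y = ∑' j, (2:ℝ)⁻¹ ^ (j + 1) * |(x j : ℝ) - (y j : ℝ)|)
    (n : ℕ) (k : ℕ)
    (G : SymProd (ℕ → I) n × I → SymProd (ℕ → I) n)
    (hG : ∀ A t, ((G (A, t)).1 : Set (ℕ → I)) =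
      (fun x j => if j < k then x j else σ t * x j) '' (A.1 : Set (ℕ → I))) :
    Continuous G ∧ (∀ A, G (A, 0) = A) ∧
    (∀ A, Metric.diam (Set.range fun t : I => G (A, t)) ≤ (2:ℝ)⁻¹ ^ k) ∧
    Nonempty ({B : SymProd (ℕ → I) n // ∃ A, G (A, 1) = B} ≃ₜ SymProd (Fin k → I) n) := by
  have hdist : ∀ A B t s, dist (G (A, t)) (G (B, s)) ≤ dist A B + 2⁻¹ ^ k * dist t s :=
    fun A B t s => SymProd.dist_le_of_coe_eq_image (hG A t) (hG B s) (by positivity)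
      (dist_scaleTail_le_add hm k t s)
  have he := (lipschitzWith_extendZero hm k).continuous
  have hp := (lipschitzWith_restrictFin hm k).continuous
  have hG_one : (fun A => G (A, 1)) = SymProd.map _ he ∘ SymProd.map _ hp :=
    funext fun A => SymProd.ext <| by
      rw [hG, Function.comp_apply, SymProd.coe_map, SymProd.coe_map, image_image]
      exact congrArg (· '' _) (scaleTail_one k)
  refine ⟨?_, fun A => ?_, fun A => ?_, ?_⟩
  · refine (lipschitzWith_two_of_dist_le_add fun A B t s => (hdist A B t s).trans ?_).continuous
    gcongr
    exact mul_le_of_le_one_left dist_nonneg (pow_le_one₀ (by norm_num) (by norm_num))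
  · refine SymProd.ext ?_
    rw [hG]
    exact (congrArg (· '' _) (scaleTail_zero k)).trans (image_id _)
  · refine diam_le_of_forall_dist_le (by positivity) ?_
    rintro _ ⟨t, rfl⟩ _ ⟨s, rfl⟩
    calc dist (G (A, t)) (G (A, s)) ≤ dist A A + 2⁻¹ ^ k * dist t s := hdist A A t s
      _ ≤ 2⁻¹ ^ k := by
          rw [dist_self, zero_add]
          exact mul_le_of_le_one_right (by positivity) (abs_sub_le_one t s)
  · have := SymProd.nonempty_homeomorph_range_map_comp (n := n) he hp
      (leftInverse_restrictFin_extendZero k)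
    rwa [← hG_one] at this

theorem stmt18 [m : MetricSpace (ℕ → I)]
    (hm : ∀ x y : ℕ → I, dist x y = ∑' j, (2:ℝ)⁻¹ ^ (j + 1) * |(x j : ℝ) - (y j : ℝ)|)
    (n : ℕ) (hn : 0 < n) (k : ℕ)
    (G : SymProd (ℕ → I) n × I → SymProd (ℕ → I) n)
    (hG : ∀ A t, ((G (A, t)).1 : Set (ℕ → I)) =
      (fun x j => if j < k then x j else σ t * x j) '' (A.1 : Set (ℕ → I))) :
    Continuous G ∧ (∀ A, G (A, 0) = A) ∧
    (∀ A, Metric.diam (Set.range fun t : I => G (A, t)) ≤ (2:ℝ)⁻¹ ^ k) ∧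
    Nonempty ({B : SymProd (ℕ → I) n // ∃ A, G (A, 1) = B} ≃ₜ SymProd (Fin k → I) n) :=
  stmt18_general (m := m) hm n k G hG
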